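/- arXiv:1203.5202 — 2 statements merged into one kernel-verified Lean document; each statement's English description precedes it below -/
import Mathlib

section
/- Let μ be a probability measure on ℕ = {1,2,…} with μ({1}) > 0, and suppose μ ∈ Γ_α with α ∈ (1/2,1). Then for every population size N ≥ 2, the time τ to the most recent common ancestor of two distinct individuals of the same generation has infinite expectation: E[τ] = ∞, where τ = min{n ≥ 1 : R_n = R'_n = 1 and U_n = U'_n}. -/
open MeasureTheory ProbabilityTheory Filter
open scoped ENNReal

/-- `L : ℕ → (0,∞)` is slowly varying: for every `c > 0`, `L(⌊cn⌋)/L(n) → 1`. -/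
def SlowlyVarying (L : ℕ → ℝ) : Prop :=
  (∀ n, 0 < L n) ∧ ∀ c : ℝ, 0 < c → Tendsto (fun n : ℕ => L ⌊c * (n : ℝ)⌋₊ / L n) atTop (nhds 1)

/-- The tail `μ({n, n+1, …})` of the probability weights `w`. -/
noncomputable def tailSum (w : ℕ → ℝ) (n : ℕ) : ℝ := ∑' k : ℕ, if n ≤ k then w k else 0

open scoped Topology

/-! The first renewal time `η 0` already has infinite mean: `τ ≥ η 0`, and
`E[η 0] = ∑ₙ μ({n+1, n+2, …})`, a series whose terms are regularly varying of index `-α > -1`.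
Cauchy condensation turns such a series into one whose consecutive ratios tend to `2^(1-α) > 1`. -/

theorem not_summable_of_tendsto_div_two_mul {f : ℕ → ℝ} {c : ℝ} (h_nonneg : ∀ n, 0 ≤ f n)
    (h_anti : Antitone f) (hc : 1 / 2 < c)
    (h_ratio : Tendsto (fun n => f (2 * n) / f n) atTop (𝓝 c)) : ¬Summable f := by
  rw [← summable_condensed_iff_of_nonneg h_nonneg fun _ _ _ hmn => h_anti hmn]
  refine not_summable_of_ratio_test_tendsto_gt_one (l := 2 * c) (by linarith) ?_
  have h_pow : Tendsto (fun k : ℕ => 2 ^ k) atTop atTop :=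
    tendsto_pow_atTop_atTop_of_one_lt one_lt_two
  refine ((h_ratio.comp h_pow).const_mul 2).congr fun k => ?_
  have h_norm (m : ℕ) : ‖(2 : ℝ) ^ m * f (2 ^ m)‖ = 2 ^ m * f (2 ^ m) :=
    Real.norm_of_nonneg (mul_nonneg (pow_nonneg zero_le_two _) (h_nonneg _))
  rw [Function.comp_apply, h_norm, h_norm, pow_succ', Nat.pow_succ', mul_assoc, mul_div_assoc,
    mul_div_mul_left _ _ (pow_ne_zero _ two_ne_zero)]

theorem SlowlyVarying.tendsto_div_two_mul {L : ℕ → ℝ} (hL : SlowlyVarying L) :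
    Tendsto (fun n => L (2 * n) / L n) atTop (𝓝 1) :=
  (hL.2 2 two_pos).congr fun n => by
    rw [show (2 : ℝ) * n = ((2 * n : ℕ) : ℝ) by push_cast; ring, Nat.floor_natCast]

section tailSum

variable {w : ℕ → ℝ}

theorem summable_tail (hwnn : ∀ k, 0 ≤ w k) (hws : Summable w) (n : ℕ) :
    Summable fun k => if n ≤ k then w k else 0 :=
  hws.of_nonneg_of_le (fun k => by split_ifs <;> simp [hwnn k])
    (fun k => by split_ifs <;> simp [hwnn k])

theorem tailSum_nonneg (hwnn : ∀ k, 0 ≤ w k) (n : ℕ) : 0 ≤ tailSum w n :=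
  tsum_nonneg fun k => by split_ifs <;> simp [hwnn k]

theorem tailSum_antitone (hwnn : ∀ k, 0 ≤ w k) (hws : Summable w) : Antitone (tailSum w) :=
  fun m n hmn => (summable_tail hwnn hws n).tsum_le_tsum
    (fun k => by split_ifs <;> first | rfl | omega | exact hwnn k) (summable_tail hwnn hws m)

theorem not_summable_tailSum (hwnn : ∀ k, 0 ≤ w k) (hws : Summable w) {α : ℝ} (hα : α < 1)
    {L : ℕ → ℝ} (hL : SlowlyVarying L)
    (htail : ∀ n : ℕ, 1 ≤ n → tailSum w n = (n : ℝ) ^ (-α) * L n) :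
    ¬Summable (tailSum w) := by
  have h_two_rpow : 1 / 2 < (2 : ℝ) ^ (-α) := by
    rw [one_div, ← Real.rpow_neg_one]
    exact Real.rpow_lt_rpow_of_exponent_lt one_lt_two (by linarith)
  refine not_summable_of_tendsto_div_two_mul (tailSum_nonneg hwnn) (tailSum_antitone hwnn hws)
    h_two_rpow ?_
  have h_ratio := hL.tendsto_div_two_mul.const_mul ((2 : ℝ) ^ (-α))
  rw [mul_one] at h_ratio
  refine h_ratio.congr' ((eventually_ge_atTop 1).mono fun n hn => ?_)
  have hn_pos : (0 : ℝ) < n := by exact_mod_cast hn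
  dsimp only
  rw [htail n hn, htail (2 * n) (by omega), Nat.cast_mul, Nat.cast_two,
    Real.mul_rpow zero_le_two hn_pos.le, mul_assoc, mul_div_assoc, mul_div_mul_left _ _
      (Real.rpow_pos_of_pos hn_pos _).ne']

end tailSum

theorem ENNReal.tsum_ofReal_eq_top_of_not_summable {ι : Type*} {f : ι → ℝ} (hf : ∀ n, 0 ≤ f n)
    (h : ¬Summable f) : ∑' n, ENNReal.ofReal (f n) = ⊤ := by
  by_contra hne
  exact h ((ENNReal.summable_toReal hne).congr fun n => ENNReal.toReal_ofReal (hf n))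

section Expectation

variable {Ω : Type*} [MeasurableSpace Ω] {P : Measure Ω} {f : Ω → ℕ}

theorem lintegral_natCast_eq_tsum_measure_lt (hf : Measurable f) :
    ∫⁻ ω, (f ω : ℝ≥0∞) ∂P = ∑' n : ℕ, P {ω | n < f ω} := by
  have h_count (k : ℕ) : (k : ℝ≥0∞) = ∑' n : ℕ, if n < k then 1 else 0 := by
    rw [tsum_eq_sum (s := Finset.range k) (by simp +contextual),
      Finset.sum_congr rfl fun n hn => if_pos (Finset.mem_range.mp hn)]
    simp
  have h_meas (n : ℕ) : MeasurableSet {ω | n < f ω} := hf measurableSet_Ioi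
  calc ∫⁻ ω, (f ω : ℝ≥0∞) ∂P
      = ∫⁻ ω, ∑' n : ℕ, {ω | n < f ω}.indicator 1 ω ∂P := by
        simp only [h_count, Set.indicator_apply, Set.mem_ofPred_eq, Pi.one_apply]
    _ = ∑' n : ℕ, P {ω | n < f ω} := by
        rw [lintegral_tsum fun n => (measurable_one.indicator (h_meas n)).aemeasurable]
        simp_rw [lintegral_indicator_one (h_meas _)]

theorem measure_lt_eq_ofReal_tailSum {w : ℕ → ℝ} (hwnn : ∀ k, 0 ≤ w k) (hws : Summable w)
    (hf : Measurable f) (hlaw : ∀ k, P {ω | f ω = k} = ENNReal.ofReal (w k)) (n : ℕ) :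
    P {ω | n < f ω} = ENNReal.ofReal (tailSum w (n + 1)) := by
  rw [tailSum, ENNReal.ofReal_tsum_of_nonneg (fun k => by split_ifs <;> simp [hwnn k])
    (summable_tail hwnn hws _), show {ω | n < f ω} = f ⁻¹' Set.Ioi n from rfl,
    ← tsum_measure_preimage_singleton (Set.to_countable _)
      fun k _ => hf (measurableSet_singleton k), tsum_subtype (Set.Ioi n) fun k => P (f ⁻¹' {k})]
  refine tsum_congr fun k => ?_
  by_cases hk : n < k
  · simp [hk, Nat.succ_le_of_lt hk, ← hlaw k, Set.preimage]
  · simp [hk, show ¬n + 1 ≤ k by omega]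

theorem lintegral_natCast_eq_top_of_tailSum_eq {w : ℕ → ℝ} (hwnn : ∀ k, 0 ≤ w k)
    (hws : Summable w) {α : ℝ} (hα : α < 1) {L : ℕ → ℝ} (hL : SlowlyVarying L)
    (htail : ∀ n : ℕ, 1 ≤ n → tailSum w n = (n : ℝ) ^ (-α) * L n)
    (hf : Measurable f) (hlaw : ∀ k, P {ω | f ω = k} = ENNReal.ofReal (w k)) :
    ∫⁻ ω, (f ω : ℝ≥0∞) ∂P = ⊤ := by
  rw [lintegral_natCast_eq_tsum_measure_lt hf]
  simp_rw [measure_lt_eq_ofReal_tailSum hwnn hws hf hlaw]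
  exact ENNReal.tsum_ofReal_eq_top_of_not_summable (fun n => tailSum_nonneg hwnn _)
    ((summable_nat_add_iff 1).not.mpr (not_summable_tailSum hwnn hws hα hL htail))

end Expectation

theorem Finset.apply_zero_le_sum_range_of_pos {a : ℕ → ℕ} {k : ℕ}
    (h : 0 < ∑ l ∈ Finset.range k, a l) : a 0 ≤ ∑ l ∈ Finset.range k, a l := by
  have hk : 0 < k := Nat.pos_of_ne_zero fun hk => by simp [hk] at h
  exact Finset.single_le_sum (fun _ _ => Nat.zero_le _) (Finset.mem_range.mpr hk)

theorem expected_tmrca_eq_top_of_alpha_in_half_one_general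
    -- the seed bank age distribution μ, given by its weights w on ℕ, supported on {1,2,…}
    (w : ℕ → ℝ) (hwnn : ∀ k, 0 ≤ w k) (hwsum : HasSum w 1)
    -- μ ∈ Γ_α with α ∈ (1/2,1)
    (α : ℝ) (hα : α < 1)
    (L : ℕ → ℝ) (hL : SlowlyVarying L)
    (htail : ∀ n : ℕ, 1 ≤ n → tailSum w n = (n : ℝ) ^ (-α) * L n)
    -- the two-lineage ancestral model
    {Ω : Type*} [MeasurableSpace Ω] (P : Measure Ω)
    (η η' U U' : ℕ → Ω → ℕ)
    (hmeas : ∀ i : Fin 4 × ℕ, Measurable (![η, η', U, U'] i.1 i.2))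
    (hlawη : ∀ l k : ℕ, P {ω | η l ω = k} = ENNReal.ofReal (w k)) :
    -- the expected time to the most recent common ancestor is infinite
    ∫⁻ ω, sInf {t : ℝ≥0∞ | ∃ n : ℕ, t = n ∧ 1 ≤ n ∧
        (∃ k : ℕ, ∑ l ∈ Finset.range k, η l ω = n) ∧
        (∃ k : ℕ, ∑ l ∈ Finset.range k, η' l ω = n) ∧ U n ω = U' n ω} ∂P = ⊤ := by
  have hη₀ : Measurable (η 0) := by simpa using hmeas (0, 0)
  rw [eq_top_iff, ← lintegral_natCast_eq_top_of_tailSum_eq hwnn hwsum.summable hα hL htail hη₀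
    (hlawη 0)]
  -- `τ ≥ S₁ = η 0`: every renewal time `n ≥ 1` is a partial sum with at least one term
  refine lintegral_mono fun ω => le_sInf ?_
  rintro _ ⟨n, rfl, hn, ⟨k, hk⟩, -⟩
  rw [← hk]
  exact_mod_cast Finset.apply_zero_le_sum_range_of_pos (hk ▸ hn)

/-- if `μ ∈ Γ_α` with `α ∈ (1/2,1)`, then for every `N ≥ 2` the time `τ` to the
most recent common ancestor of two individuals of the same generation (the least `n ≥ 1` at which
both renewal processes have a renewal and the uniform labels agree, `∞` if there is none) has
infinite expectation. -/
theorem expected_tmrca_eq_top_of_alpha_in_half_one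
    -- the seed bank age distribution μ, given by its weights w on ℕ, supported on {1,2,…}
    (w : ℕ → ℝ) (hw0 : w 0 = 0) (hwnn : ∀ k, 0 ≤ w k) (hwsum : HasSum w 1) (hw1 : 0 < w 1)
    -- μ ∈ Γ_α with α ∈ (1/2,1)
    (α : ℝ) (hα0 : 1 / 2 < α) (hα : α < 1)
    (L : ℕ → ℝ) (hL : SlowlyVarying L)
    (htail : ∀ n : ℕ, 1 ≤ n → tailSum w n = (n : ℝ) ^ (-α) * L n)
    -- the population size
    (N : ℕ) (hN : 2 ≤ N)
    -- the two-lineage ancestral model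
    {Ω : Type*} [MeasurableSpace Ω] (P : Measure Ω) [IsProbabilityMeasure P]
    (η η' U U' : ℕ → Ω → ℕ)
    (hmeas : ∀ i : Fin 4 × ℕ, Measurable (![η, η', U, U'] i.1 i.2))
    (hlawη : ∀ l k : ℕ, P {ω | η l ω = k} = ENNReal.ofReal (w k))
    (hlawη' : ∀ l k : ℕ, P {ω | η' l ω = k} = ENNReal.ofReal (w k))
    (hlawU : ∀ n j : ℕ, P {ω | U n ω = j} = if 1 ≤ j ∧ j ≤ N then (N : ℝ≥0∞)⁻¹ else 0)
    (hlawU' : ∀ n j : ℕ, P {ω | U' n ω = j} = if 1 ≤ j ∧ j ≤ N then (N : ℝ≥0∞)⁻¹ else 0)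
    (hindep : iIndepFun
      (fun i : Fin 4 × ℕ => ![η, η', U, U'] i.1 i.2) P) :
    -- the expected time to the most recent common ancestor is infinite
    ∫⁻ ω, sInf {t : ℝ≥0∞ | ∃ n : ℕ, t = n ∧ 1 ≤ n ∧
        (∃ k : ℕ, ∑ l ∈ Finset.range k, η l ω = n) ∧
        (∃ k : ℕ, ∑ l ∈ Finset.range k, η' l ω = n) ∧ U n ω = U' n ω} ∂P = ⊤ :=
  expected_tmrca_eq_top_of_alpha_in_half_one_general w hwnn hwsum α hα L hL htail P η η' U U' hmeas
    hlawη
end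

section
/- Let μ be a probability measure on ℕ = {1,2,…} with μ({1}) > 0. For every n there is a constant c(n) < ∞, depending only on n, such that for all N > n and every configuration x ∈ S_n, one step of the seed-bank ancestral dynamics from x satisfies P(at least two mergers) ≤ c(n)/N². -/
/-! A relocated ball can merge only if its section is one of the first `n`, where all the
balls that stay put sit, or is the section of an earlier relocated ball; call such a ball blocked.
Every unblocked ball lands in a cell of its own, so two mergers force two blocked balls `j < i`
(displacements are a.s. positive, as `w 0 = 0`). Whether `j` is blocked does not depend on the
section of `i`, and the blocked sections of a ball never depend on its own section, so
integrating out the section of `i` and then that of `j` bounds the probability that both are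
blocked by `((n + l)/N)²`, `l = x 1`. A union bound over the at most `n²` pairs gives
`c(n) = 4 n⁴`. -/

open MeasureTheory ProbabilityTheory Filter

open scoped ENNReal

/-- The discrete measure on `ℕ` with weights `f`. -/

noncomputable def measureOfWeights (f : ℕ → ℝ) : Measure ℕ :=
  Measure.sum (fun k => ENNReal.ofReal (f k) • Measure.dirac k)

/-- The uniform distribution on the `N` sections, modelled by `Fin N`. -/

noncomputable def unifFin (N : ℕ) : Measure (Fin N) := (N : ℝ≥0∞)⁻¹ • Measure.count

/-- Given a configuration `x : ℕ → ℕ` (with `x j` balls in urn `j`, urns `j ≥ 1`) and a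
relocation sample `ξ` assigning to each of the `l = x 1` balls of urn 1 a displacement and a
section, the number of balls after one step of the seed-bank ancestral dynamics: after the
step, urn `j ≥ 1` contains the `x (j+1)` previously present balls (occupying the first
`x (j+1)` sections) together with the relocated balls `b` with displacement `j` placed at
their sections, and balls occupying the same (urn, section) pair merge into one. -/

noncomputable def ballsAfter (N : ℕ) (x : ℕ → ℕ) {l : ℕ} (ξ : Fin l → ℕ × Fin N) : ℕ :=
  Set.ncard {q : ℕ × Fin N | 1 ≤ q.1 ∧ (((q.2 : ℕ) < x (q.1 + 1)) ∨ ∃ b : Fin l, ξ b = q)}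

open Function

lemma measureOfWeights_singleton (w : ℕ → ℝ) (k : ℕ) :
    measureOfWeights w {k} = ENNReal.ofReal (w k) := by
  rw [measureOfWeights, Measure.sum_apply _ (measurableSet_singleton k),
    tsum_eq_single k fun j hj => by simp [Measure.dirac_apply', hj]]
  simp

lemma isProbabilityMeasure_measureOfWeights {w : ℕ → ℝ} (hwnn : ∀ k, 0 ≤ w k)
    (hwsum : HasSum w 1) : IsProbabilityMeasure (measureOfWeights w) := by
  constructor
  simp only [measureOfWeights, Measure.sum_apply _ MeasurableSet.univ, Measure.smul_apply,
    measure_univ, smul_eq_mul, mul_one]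
  rw [← ENNReal.ofReal_tsum_of_nonneg hwnn hwsum.summable, hwsum.tsum_eq, ENNReal.ofReal_one]

lemma unifFin_apply (N : ℕ) (s : Set (Fin N)) : unifFin N s = s.encard / N := by
  rw [unifFin, Measure.smul_apply, Measure.count_apply s.toFinite.measurableSet, smul_eq_mul,
    ENNReal.div_eq_inv_mul]

lemma isProbabilityMeasure_unifFin {N : ℕ} (hN : N ≠ 0) : IsProbabilityMeasure (unifFin N) := by
  constructor
  rw [unifFin_apply, Set.encard_univ, ENat.card_eq_coe_fintype_card, Fintype.card_fin]
  exact ENNReal.div_self (by exact_mod_cast hN) (ENNReal.natCast_ne_top N)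

lemma measure_pi_setOf_mem_inter_le {ι α : Type*} [Fintype ι] [DecidableEq ι]
    [MeasurableSpace α] [MeasurableSingletonClass α] [Countable α]
    (μ : Measure α) [IsProbabilityMeasure μ] (i : ι) {F : (ι → α) → Set α} {E : Set (ι → α)}
    {ε : ℝ≥0∞} (hF : ∀ σ t, F (update σ i t) = F σ) (hE : ∀ σ t, update σ i t ∈ E ↔ σ ∈ E)
    (hFε : ∀ σ, μ (F σ) ≤ ε) :
    Measure.pi (fun _ => μ) ({σ | σ i ∈ F σ} ∩ E) ≤ ε * Measure.pi (fun _ => μ) E := by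
  rw [← lintegral_indicator_one (MeasurableSet.of_discrete),
    ← lintegral_indicator_one (MeasurableSet.of_discrete), ← lintegral_const_mul _
      (Measurable.of_discrete)]
  refine lintegral_le_of_lmarginal_le {i} Measurable.of_discrete Measurable.of_discrete ?_
  intro σ
  simp only [lmarginal_singleton]
  have hsplit : ∀ t, ({σ | σ i ∈ F σ} ∩ E).indicator 1 (update σ i t)
      = E.indicator (1 : (ι → α) → ℝ≥0∞) σ * (F σ).indicator 1 t := fun t => by
    by_cases hσ : σ ∈ E <;> by_cases ht : t ∈ F σ <;> simp [Set.indicator, hF, hE, hσ, ht]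
  calc ∫⁻ t, ({σ | σ i ∈ F σ} ∩ E).indicator 1 (update σ i t) ∂μ
      = E.indicator 1 σ * μ (F σ) := by
        simp only [hsplit, lintegral_const_mul _ Measurable.of_discrete,
          lintegral_indicator_one MeasurableSet.of_discrete]
    _ ≤ E.indicator 1 σ * ε := by gcongr; exact hFε σ
    _ = ∫⁻ t, ε * E.indicator 1 (update σ i t) ∂μ := by
        have hEσ : ∀ t, E.indicator (1 : (ι → α) → ℝ≥0∞) (update σ i t) = E.indicator 1 σ :=
          fun t => by by_cases hσ : σ ∈ E <;> simp [Set.indicator, hE, hσ]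
        simp [hEσ, mul_comm]

lemma measure_pi_pair_le {ι α : Type*} [Fintype ι] [DecidableEq ι]
    [MeasurableSpace α] [MeasurableSingletonClass α] [Countable α]
    (μ : Measure α) [IsProbabilityMeasure μ] {i j : ι} (hij : j ≠ i)
    {F G : (ι → α) → Set α} {ε δ : ℝ≥0∞} (hF : ∀ σ t, F (update σ i t) = F σ)
    (hGi : ∀ σ t, G (update σ i t) = G σ) (hGj : ∀ σ t, G (update σ j t) = G σ)
    (hFε : ∀ σ, μ (F σ) ≤ ε) (hGδ : ∀ σ, μ (G σ) ≤ δ) :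
    Measure.pi (fun _ => μ) {σ | σ i ∈ F σ ∧ σ j ∈ G σ} ≤ ε * δ := by
  have hG := measure_pi_setOf_mem_inter_le μ j (F := G) (E := Set.univ) hGj
    (fun _ _ => Iff.rfl) hGδ
  rw [Set.inter_univ, measure_univ, mul_one] at hG
  calc Measure.pi (fun _ => μ) {σ | σ i ∈ F σ ∧ σ j ∈ G σ}
      ≤ ε * Measure.pi (fun _ => μ) {σ | σ j ∈ G σ} :=
        measure_pi_setOf_mem_inter_le μ i (E := {σ | σ j ∈ G σ}) hF
          (fun σ t => by simp only [Set.mem_ofPred_eq, hGi, update_of_ne hij]) hFε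
    _ ≤ ε * δ := by gcongr

lemma measure_pi_prod_exists_fst_eq_null {ι α β : Type*} [Fintype ι] [MeasurableSpace α]
    [MeasurableSingletonClass α] [MeasurableSpace β] (μ : Measure α) (ν : Measure β)
    [SigmaFinite μ] [SigmaFinite ν] {a : α} (ha : μ {a} = 0) :
    Measure.pi (fun _ : ι => μ.prod ν) {ξ | ∃ b, (ξ b).1 = a} = 0 := by
  have hfst : μ.prod ν (Prod.fst ⁻¹' {a}) = 0 := by
    rw [← Set.prod_univ, Measure.prod_prod, ha, zero_mul]
  rw [Set.ofPred_exists]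
  exact
    measure_iUnion_null fun b => Measure.pi_eval_preimage_null (fun _ => μ.prod ν) (i := b) hfst

lemma measurePreserving_pi_snd {ι α β : Type*} [Fintype ι] [MeasurableSpace α]
    [MeasurableSpace β] (μ : Measure α) (ν : Measure β) [IsProbabilityMeasure μ]
    [SigmaFinite ν] :
    MeasurePreserving (fun (ξ : ι → α × β) b => (ξ b).2)
      (Measure.pi fun _ => μ.prod ν) (Measure.pi fun _ => ν) :=
  measurePreserving_pi _ _ fun _ => measurePreserving_snd

def blockedSections {l N : ℕ} (n : ℕ) (σ : Fin l → Fin N) (b : Fin l) : Set (Fin N) :=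
  {t | (t : ℕ) < n} ∪ σ '' Set.Iio b

lemma blockedSections_update {l N : ℕ} (n : ℕ) (σ : Fin l → Fin N) {b k : Fin l} (hbk : b ≤ k)
    (t : Fin N) : blockedSections n (update σ k t) b = blockedSections n σ b := by
  rw [blockedSections, blockedSections,
    Set.image_congr fun c hc => update_of_ne (Set.mem_Iio.mp hc |>.trans_le hbk).ne t σ]

lemma unifFin_blockedSections_le {l N : ℕ} (n : ℕ) (σ : Fin l → Fin N) (b : Fin l) :
    unifFin N (blockedSections n σ b) ≤ (n + l : ℕ) / N := by
  rw [unifFin_apply]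
  gcongr
  suffices (blockedSections n σ b).encard ≤ (n + l : ℕ) by exact_mod_cast this
  calc (blockedSections n σ b).encard
      ≤ {t : Fin N | (t : ℕ) < n}.encard + (σ '' Set.Iio b).encard := Set.encard_union_le _ _
    _ ≤ {k : ℕ | k < n}.encard + (Set.univ : Set (Fin l)).encard := by
        gcongr
        · rw [← Fin.val_injective.encard_image]
          exact Set.encard_le_encard (by rintro _ ⟨t, ht, rfl⟩; exact ht)
        · exact (Set.encard_image_le _ _).trans (Set.encard_le_encard (Set.subset_univ _))
    _ = (n + l : ℕ) := by simp [Set.Nat.encard_range]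

def collisionPair {l N : ℕ} (n : ℕ) (i j : Fin l) : Set (Fin l → Fin N) :=
  {σ | j < i ∧ σ i ∈ blockedSections n σ i ∧ σ j ∈ blockedSections n σ j}

lemma measure_pi_collisionPair_le {l N : ℕ} (n : ℕ) (hN : N ≠ 0) (i j : Fin l) :
    Measure.pi (fun _ => unifFin N) (collisionPair n i j) ≤ ((n + l : ℕ) / N) ^ 2 := by
  have := isProbabilityMeasure_unifFin hN
  by_cases hji : j < i
  · rw [sq]
    exact (measure_mono fun σ hσ => hσ.2).trans <| measure_pi_pair_le _ hji.ne
      (blockedSections_update n · le_rfl) (blockedSections_update n · hji.le)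
      (blockedSections_update n · le_rfl) (unifFin_blockedSections_le n · i)
      (unifFin_blockedSections_le n · j)
  · simp [collisionPair, hji]

lemma le_of_tsum_natCast_eq {x : ℕ → ℕ} {n : ℕ} (hsum : ∑' i, (x i : ℝ≥0∞) = n) (j : ℕ) :
    x j ≤ n := by
  exact_mod_cast hsum ▸ ENNReal.le_tsum (f := fun i => (x i : ℝ≥0∞)) j

def occupiedCells (N : ℕ) (x : ℕ → ℕ) : Set (ℕ × Fin N) :=
  {q | 1 ≤ q.1 ∧ (q.2 : ℕ) < x (q.1 + 1)}

lemma encard_setOf_val_lt {N k : ℕ} (hk : k ≤ N) : {t : Fin N | (t : ℕ) < k}.encard = k := by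
  rw [← Fin.val_injective.encard_image, ← Set.Nat.encard_range k]
  congr 1
  ext m
  exact ⟨by rintro ⟨t, ht, rfl⟩; exact ht, fun hm =>
    ⟨⟨m, (show m < k from hm).trans_le hk⟩, hm, rfl⟩⟩

lemma encard_occupiedCells_add {N n : ℕ} {x : ℕ → ℕ} (hx0 : x 0 = 0) (hxN : ∀ j, x j ≤ N)
    (hsum : ∑' i, (x i : ℝ≥0∞) = n) : (occupiedCells N x).encard + x 1 = n := by
  suffices ((occupiedCells N x).encard : ℝ≥0∞) + x 1 = n by exact_mod_cast this
  have hunion : occupiedCells N x =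
      ⋃ j : ℕ, Prod.mk (j + 1) '' {t : Fin N | (t : ℕ) < x (j + 2)} := by
    ext ⟨k, t⟩
    simp only [occupiedCells, Set.mem_ofPred_eq, Set.mem_iUnion, Set.mem_image, Prod.mk.injEq]
    constructor
    · rintro ⟨hk, ht⟩
      exact ⟨k - 1, t, by rwa [show k - 1 + 2 = k + 1 by omega], Nat.sub_add_cancel hk, rfl⟩
    · rintro ⟨j, t, ht, rfl, rfl⟩
      exact ⟨by omega, ht⟩
  have hcount : Measure.count (occupiedCells N x) = ∑' j, (x (j + 2) : ℝ≥0∞) := by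
    rw [hunion, measure_iUnion (fun j k hjk => ?_) (fun _ => MeasurableSet.of_discrete)]
    · congr 1
      ext j
      rw [Measure.count_injective_image (Prod.mk_right_injective _),
        Measure.count_apply MeasurableSet.of_discrete, encard_setOf_val_lt (hxN _)]
      rfl
    · simp only [onFun, Set.disjoint_left]
      rintro _ ⟨t, _, rfl⟩ ⟨s, _, h⟩
      simp only [Prod.mk.injEq] at h
      exact hjk (by omega)
  rw [← Measure.count_apply MeasurableSet.of_discrete, hcount, ← hsum,
    tsum_eq_zero_add' (f := fun i => (x i : ℝ≥0∞)) ENNReal.summable,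
    tsum_eq_zero_add' (f := fun i => (x (i + 1) : ℝ≥0∞)) ENNReal.summable, hx0, Nat.cast_zero,
    zero_add, add_comm]

lemma ncard_add_ncard_firstVisits_le {β : Type*} {l : ℕ} {A : Set β} (hA : A.Finite)
    (ξ : Fin l → β) :
    A.ncard + {b | ξ b ∉ A ∧ ∀ c < b, ξ c ≠ ξ b}.ncard ≤ (A ∪ Set.range ξ).ncard := by
  set G : Set (Fin l) := {b | ξ b ∉ A ∧ ∀ c < b, ξ c ≠ ξ b}
  have hinj : Set.InjOn ξ G := by
    intro b hb c hc hbc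
    by_contra hne
    rcases lt_or_gt_of_ne hne with h | h
    · exact hc.2 b h hbc
    · exact hb.2 c h hbc.symm
  have hdisj : Disjoint A (ξ '' G) := by
    rw [Set.disjoint_right]
    rintro _ ⟨b, hb, rfl⟩
    exact hb.1
  calc A.ncard + G.ncard = (A ∪ ξ '' G).ncard := by
        rw [Set.ncard_union_eq hdisj hA (Set.toFinite _), hinj.ncard_image]
    _ ≤ (A ∪ Set.range ξ).ncard :=
        Set.ncard_le_ncard (Set.union_subset_union_right _ (Set.image_subset_range _ _))
          (hA.union (Set.finite_range ξ))

lemma ballsAfter_eq_ncard {N l : ℕ} (x : ℕ → ℕ) {ξ : Fin l → ℕ × Fin N}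
    (hξ : ∀ b, 1 ≤ (ξ b).1) : ballsAfter N x ξ = (occupiedCells N x ∪ Set.range ξ).ncard := by
  rw [ballsAfter]
  congr 1
  ext q
  simp only [occupiedCells, Set.mem_union, Set.mem_ofPred_eq, Set.mem_range]
  constructor
  · rintro ⟨hq, h | h⟩
    · exact Or.inl ⟨hq, h⟩
    · exact Or.inr h
  · rintro (h | ⟨b, rfl⟩)
    · exact ⟨h.1, Or.inl h.2⟩
    · exact ⟨hξ b, Or.inr ⟨b, rfl⟩⟩

lemma one_lt_ncard_setOf_mem_blockedSections {N n : ℕ} {x : ℕ → ℕ} (hxn : ∀ j, x j ≤ n)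
    (hocc : (occupiedCells N x).encard + x 1 = n)
    {ξ : Fin (x 1) → ℕ × Fin N} (hξ : ∀ b, 1 ≤ (ξ b).1) (h : ballsAfter N x ξ + 2 ≤ n) :
    1 < {b | (ξ b).2 ∈ blockedSections n (fun c => (ξ c).2) b}.ncard := by
  have hfin : (occupiedCells N x).Finite := Set.encard_ne_top_iff.1 fun htop => by
    simp [htop] at hocc
  have hocc_card : (occupiedCells N x).ncard + x 1 = n := by
    rw [← hfin.cast_ncard_eq] at hocc
    exact_mod_cast hocc
  set C : Set (Fin (x 1)) := {b | (ξ b).2 ∈ blockedSections n (fun c => (ξ c).2) b}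
  have hfree : Cᶜ.ncard ≤ {b | ξ b ∉ occupiedCells N x ∧ ∀ c < b, ξ c ≠ ξ b}.ncard := by
    refine Set.ncard_le_ncard (fun b hb => ⟨fun hmem => ?_, fun c hc hcb => ?_⟩)
    · exact hb (Or.inl (hmem.2.trans_le (hxn _)))
    · exact hb (Or.inr ⟨c, hc, congrArg Prod.snd hcb⟩)
  have hsplit := Set.ncard_add_ncard_compl C
  have hcount := ncard_add_ncard_firstVisits_le hfin ξ
  rw [← ballsAfter_eq_ncard x hξ] at hcount
  simp only [Nat.card_eq_fintype_card, Fintype.card_fin] at hsplit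
  omega

lemma setOf_ballsAfter_add_two_le_subset {N n : ℕ} {x : ℕ → ℕ} (hxn : ∀ j, x j ≤ n)
    (hocc : (occupiedCells N x).encard + x 1 = n) :
    {ξ : Fin (x 1) → ℕ × Fin N | ballsAfter N x ξ + 2 ≤ n} ⊆
      {ξ | ∃ b, (ξ b).1 = 0} ∪ ⋃ i, ⋃ j, (fun ξ b => (ξ b).2) ⁻¹' collisionPair n i j := by
  intro ξ hξ
  by_cases hz : ∃ b, (ξ b).1 = 0
  · exact Or.inl hz
  push Not at hz
  obtain ⟨i, hi, j, hj, hij⟩ := (Set.one_lt_ncard).1 <|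
    one_lt_ncard_setOf_mem_blockedSections hxn hocc (fun b => Nat.one_le_iff_ne_zero.2 (hz b)) hξ
  refine Or.inr (Set.mem_iUnion₂.2 ?_)
  rcases lt_or_gt_of_ne hij with h | h
  · exact ⟨j, i, h, hj, hi⟩
  · exact ⟨i, j, h, hi, hj⟩

lemma measure_setOf_ballsAfter_add_two_le_le {w : ℕ → ℝ} (hw0 : w 0 = 0) (hwnn : ∀ k, 0 ≤ w k)
    (hwsum : HasSum w 1) {N n : ℕ} (hnN : n < N) {x : ℕ → ℕ} (hx0 : x 0 = 0)
    (hsum : ∑' i, (x i : ℝ≥0∞) = n) :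
    Measure.pi (fun _ : Fin (x 1) => (measureOfWeights w).prod (unifFin N))
        {ξ | ballsAfter N x ξ + 2 ≤ n}
      ≤ (x 1 : ℝ≥0∞) ^ 2 * ((n + x 1 : ℕ) / N) ^ 2 := by
  have := isProbabilityMeasure_measureOfWeights hwnn hwsum
  have := isProbabilityMeasure_unifFin (N := N) (by omega)
  set P := Measure.pi fun _ : Fin (x 1) => (measureOfWeights w).prod (unifFin N)
  have hxn := le_of_tsum_natCast_eq hsum
  have hocc := encard_occupiedCells_add hx0 (fun j => (hxn j).trans hnN.le) hsum
  have hpair (i j : Fin (x 1)) :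
      P ((fun ξ b => (ξ b).2) ⁻¹' collisionPair n i j) ≤ ((n + x 1 : ℕ) / N) ^ 2 := by
    rw [(measurePreserving_pi_snd _ _).measure_preimage MeasurableSet.of_discrete.nullMeasurableSet]
    exact measure_pi_collisionPair_le n (by omega) i j
  calc P {ξ | ballsAfter N x ξ + 2 ≤ n}
      ≤ P {ξ | ∃ b, (ξ b).1 = 0} + ∑ i, ∑ j, P ((fun ξ b => (ξ b).2) ⁻¹' collisionPair n i j) :=
        (measure_mono (setOf_ballsAfter_add_two_le_subset hxn hocc)).trans <|
          (measure_union_le _ _).trans <| add_le_add le_rfl <|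
            (measure_iUnion_fintype_le _ _).trans <|
              Finset.sum_le_sum fun i _ => measure_iUnion_fintype_le _ _
    _ ≤ 0 + ∑ _i : Fin (x 1), ∑ _j : Fin (x 1), ((n + x 1 : ℕ) / N : ℝ≥0∞) ^ 2 := by
        rw [measure_pi_prod_exists_fst_eq_null _ _ ((measureOfWeights_singleton w 0).trans
          (by simp [hw0]))]
        gcongr with i _ j _
        exact hpair i j
    _ = (x 1 : ℝ≥0∞) ^ 2 * ((n + x 1 : ℕ) / N) ^ 2 := by simp [sq, mul_assoc]

theorem one_step_multiple_merger_probability_general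
    (w : ℕ → ℝ) (hw0 : w 0 = 0) (hwnn : ∀ k, 0 ≤ w k) (hwsum : HasSum w 1) :
    ∀ n : ℕ, ∃ c : ℝ, ∀ N : ℕ, n < N → ∀ x : ℕ → ℕ, x 0 = 0 →
      (∑' i : ℕ, (x i : ℝ≥0∞)) = n →
      ((Measure.pi (fun _ : Fin (x 1) => (measureOfWeights w).prod (unifFin N)))
            {ξ | ballsAfter N x ξ + 2 ≤ n}).toReal
        ≤ c / (N : ℝ) ^ 2 := by
  intro n
  refine ⟨4 * n ^ 4, fun N hnN x hx0 hsum => ?_⟩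
  have hN : (N : ℝ≥0∞) ≠ 0 := by exact_mod_cast (show N ≠ 0 by omega)
  have hl : (x 1 : ℝ) ≤ n := by exact_mod_cast le_of_tsum_natCast_eq hsum 1
  calc _ ≤ ((x 1 : ℝ≥0∞) ^ 2 * ((n + x 1 : ℕ) / N) ^ 2).toReal :=
        ENNReal.toReal_mono (by simp [ENNReal.mul_eq_top, ENNReal.div_eq_top, hN])
          (measure_setOf_ballsAfter_add_two_le_le hw0 hwnn hwsum hnN hx0 hsum)
    _ = (x 1 : ℝ) ^ 2 * ((n + x 1 : ℝ) / N) ^ 2 := by simp [ENNReal.toReal_div, ENNReal.toReal_add]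
    _ ≤ (n : ℝ) ^ 2 * ((n + n : ℝ) / N) ^ 2 := by gcongr
    _ = 4 * n ^ 4 / (N : ℝ) ^ 2 := by ring

/-- for every `n` there is `c(n) < ∞`, depending only on `n`, such that for all
`N > n` and every configuration `x ∈ S_n`, the probability of at least two mergers in one step
of the seed-bank ancestral dynamics is at most `c(n)/N²`. -/
theorem one_step_multiple_merger_probability
    (w : ℕ → ℝ) (hw0 : w 0 = 0) (hwnn : ∀ k, 0 ≤ w k) (hwsum : HasSum w 1) (hw1 : 0 < w 1) :
    ∀ n : ℕ, ∃ c : ℝ, ∀ N : ℕ, n < N → ∀ x : ℕ → ℕ, x 0 = 0 →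
      (∑' i : ℕ, (x i : ℝ≥0∞)) = n →
      ((Measure.pi (fun _ : Fin (x 1) => (measureOfWeights w).prod (unifFin N)))
            {ξ | ballsAfter N x ξ + 2 ≤ n}).toReal
        ≤ c / (N : ℝ) ^ 2 :=
  one_step_multiple_merger_probability_general w hw0 hwnn hwsum
end
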